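/- Let (M, d) be a metric space and let γ′, γ be lines in M. If γ′ ≺ γ, then B_γ(x) ≤ B_{γ′}(x) for all x ∈ M. Consequently, if γ′ ∼ γ (i.e. γ′ ≺ γ and γ ≺ γ′), then B_γ(x) = B_{γ′}(x) for all x ∈ M. -/
import Mathlib


open Filter Topology

variable {M : Type*} [MetricSpace M]

/-- A ray in a metric space: a map `γ` defined (in effect) on `[0, ∞)` with
`d(γ s, γ t) = |s - t|` for all `s, t ≥ 0`. -/
def IsRay (γ : ℝ → M) : Prop :=
  ∀ s t : ℝ, 0 ≤ s → 0 ≤ t → dist (γ s) (γ t) = |s - t|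

/-- A line in a metric space: a map `γ : ℝ → M` with `d(γ s, γ t) = |s - t|`. -/
def IsLine (γ : ℝ → M) : Prop :=
  ∀ s t : ℝ, dist (γ s) (γ t) = |s - t|

/-- The Busemann function of a ray `γ`:
`b_γ(x) = lim_{t → ∞} (d(x, γ t) - t)`, which exists and equals the infimum
since `t ↦ d(x, γ t) - t` is nonincreasing on `[0, ∞)` and bounded below. -/
noncomputable def busemann (γ : ℝ → M) (x : M) : ℝ :=
  ⨅ t : Set.Ici (0 : ℝ), (dist x (γ t) - (t : ℝ))

/-- For a line `γ`, the negative ray `γ⁻(t) = γ(-t)`.  (The positive ray `γ⁺`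
is just `γ` itself, restricted to `[0, ∞)`.) -/
def negRay (γ : ℝ → M) : ℝ → M := fun t => γ (-t)

/-- The barrier function of a line `γ`: `B_γ = b_{γ⁺} + b_{γ⁻}`. -/
noncomputable def barrier (γ : ℝ → M) (x : M) : ℝ :=
  busemann γ x + busemann (negRay γ) x

/-- `γ' ≺ γ`: the barrier of `γ` vanishes at `γ' 0` and both Busemann functions
`b_{γ⁺}`, `b_{γ⁻}` calibrate `γ'` (every forward translate of `γ'` is a coray to
`γ⁺` and every backward translate is a coray to `γ⁻`). -/
def Prec (γ' γ : ℝ → M) : Prop :=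
  busemann γ (γ' 0) + busemann (negRay γ) (γ' 0) = 0 ∧
  ∀ t : ℝ, busemann γ (γ' t) = busemann γ (γ' 0) - t ∧
    busemann (negRay γ) (γ' t) = busemann (negRay γ) (γ' 0) + t

/-- A geodesic metric space: any two points are joined by a minimizing geodesic
segment. -/
def IsGeodesicSpace (M : Type*) [MetricSpace M] : Prop :=
  ∀ x y : M, ∃ σ : ℝ → M, σ 0 = x ∧ σ (dist x y) = y ∧
    ∀ s t : ℝ, s ∈ Set.Icc 0 (dist x y) → t ∈ Set.Icc 0 (dist x y) →
      dist (σ s) (σ t) = |s - t|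

/-- `γ'` is a coray to the ray `γ`: there are `tᵢ → ∞`, points `xᵢ → γ' 0` and
minimal geodesic segments `cᵢ` from `xᵢ` to `γ (tᵢ)` of length `Tᵢ = d(xᵢ, γ tᵢ) → ∞`
converging to `γ'` uniformly on compact subintervals of `[0, ∞)`. -/
def IsCoray (γ' γ : ℝ → M) : Prop :=
  ∃ (t : ℕ → ℝ) (x : ℕ → M) (c : ℕ → ℝ → M),
    (∀ i, 0 ≤ t i) ∧
    Tendsto t atTop atTop ∧
    Tendsto x atTop (𝓝 (γ' 0)) ∧
    (∀ i, c i 0 = x i) ∧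
    (∀ i, c i (dist (x i) (γ (t i))) = γ (t i)) ∧
    (∀ i, ∀ s s' : ℝ, s ∈ Set.Icc 0 (dist (x i) (γ (t i))) →
      s' ∈ Set.Icc 0 (dist (x i) (γ (t i))) → dist (c i s) (c i s') = |s - s'|) ∧
    Tendsto (fun i => dist (x i) (γ (t i))) atTop atTop ∧
    (∀ K > (0 : ℝ), ∀ ε > (0 : ℝ), ∃ N : ℕ, ∀ i ≥ N,
      ∀ s ∈ Set.Icc (0 : ℝ) K, dist (c i s) (γ' s) < ε)

/-- The line `γ` has the uniqueness property: through each point of the zero set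
of `B_γ` there is at most one line `γ''` with `γ'' ≺ γ`. -/
def HasUniqueCalibLine (γ : ℝ → M) : Prop :=
  ∀ x : M, barrier γ x = 0 →
    ∀ γ₁ γ₂ : ℝ → M, IsLine γ₁ → IsLine γ₂ → γ₁ 0 = x → γ₂ 0 = x →
      Prec γ₁ γ → Prec γ₂ γ → γ₁ = γ₂

lemma IsLine.isRay {γ : ℝ → M} (h : IsLine γ) : IsRay γ :=
  fun s t _ _ => h s t

lemma IsLine.negRay_isRay {γ : ℝ → M} (h : IsLine γ) : IsRay (negRay γ) := by
  intro s t _ _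
  simp only [negRay, h (-s) (-t)]
  rw [show -s - -t = -(s - t) by ring, abs_neg]

lemma busemann_bddBelow (γ : ℝ → M) (hγ : IsRay γ) (x : M) :
    BddBelow (Set.range fun t : Set.Ici (0 : ℝ) => dist x (γ t) - (t : ℝ)) := by
  refine ⟨-dist x (γ 0), ?_⟩
  rintro _ ⟨⟨t, ht⟩, rfl⟩
  rw [Set.mem_Ici] at ht
  have h1 : dist (γ 0) (γ t) = t := by
    rw [hγ 0 t le_rfl ht]; rw [abs_of_nonpos (by linarith)]; ring
  have h2 := dist_triangle (γ 0) x (γ t)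
  simp only
  rw [dist_comm (γ 0) x] at h2
  linarith [h1 ▸ h2]

lemma busemann_le (γ : ℝ → M) (hγ : IsRay γ) (x : M) {t : ℝ} (ht : 0 ≤ t) :
    busemann γ x ≤ dist x (γ t) - t :=
  ciInf_le (busemann_bddBelow γ hγ x) ⟨t, ht⟩

lemma busemann_lipschitz (γ : ℝ → M) (hγ : IsRay γ) (x y : M) :
    busemann γ x ≤ dist x y + busemann γ y := by
  rw [← sub_le_iff_le_add']
  refine le_ciInf fun ⟨t, ht⟩ => ?_
  have := busemann_le γ hγ x (t := t) ht
  have htr := dist_triangle x y (γ t)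
  simp only [Set.mem_Ici] at ht
  simp only
  linarith

theorem prec_barrier_le {γ' γ : ℝ → M} (h' : IsLine γ') (h : IsLine γ)
    (hp : Prec γ' γ) (x : M) : barrier γ x ≤ barrier γ' x := by
  have key : ∀ s t : ℝ, 0 ≤ s → 0 ≤ t →
      barrier γ x ≤ (dist x (γ' s) - s) + (dist x (negRay γ' t) - t) := by
    intro s t hs ht
    have h1 : busemann γ x ≤ dist x (γ' s) + busemann γ (γ' s) :=
      busemann_lipschitz γ h.isRay x (γ' s)
    have h2 : busemann (negRay γ) x ≤ dist x (γ' (-t)) + busemann (negRay γ) (γ' (-t)) :=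
      busemann_lipschitz (negRay γ) h.negRay_isRay x (γ' (-t))
    have e1 := (hp.2 s).1
    have e2 := (hp.2 (-t)).2
    have e0 := hp.1
    simp only [barrier, negRay]
    linarith
  simp only [barrier]
  rw [← sub_le_iff_le_add']
  refine le_ciInf fun ⟨s, hs⟩ => ?_
  simp only [Set.mem_Ici] at hs
  rw [sub_le_iff_le_add', ← sub_le_iff_le_add]
  refine le_ciInf fun ⟨t, ht⟩ => ?_
  simp only [Set.mem_Ici] at ht
  rw [sub_le_iff_le_add]
  have := key t s ht hs
  simp only [barrier] at this ⊢
  linarith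

/-- `γ' ≺ γ` implies `B_γ ≤ B_{γ'}`; consequently `γ' ∼ γ` implies
`B_γ = B_{γ'}`. -/
theorem barrier_le_of_prec (γ' γ : ℝ → M) (h' : IsLine γ') (h : IsLine γ) :
    (Prec γ' γ → ∀ x : M, barrier γ x ≤ barrier γ' x) ∧
    ((Prec γ' γ ∧ Prec γ γ') → ∀ x : M, barrier γ x = barrier γ' x) := by
  refine ⟨fun hp x => prec_barrier_le h' h hp x, fun ⟨hp, hq⟩ x => ?_⟩
  exact le_antisymm (prec_barrier_le h' h hp x) (prec_barrier_le h h' hq x)
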